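/- arXiv:1906.04140 — 4 statements merged into one kernel-verified Lean document; each statement's English description precedes it below -/
import Mathlib

section
/- Fusion lemma (train argument): Let U, V, W₁, …, W_m be complex vector spaces, let ζ₁, …, ζ_{m+1} ∈ End(U ⊗ V) with ζ_{m+1} = ζ₁, and for 1 ≤ k ≤ m let ξ_k ∈ End(U ⊗ W_k) and η_k ∈ End(V ⊗ W_k). Regard all of these as endomorphisms of U ⊗ V ⊗ W₁ ⊗ ⋯ ⊗ W_m acting as the identity on the tensor factors not indicated. If for each 1 ≤ k ≤ m the auxiliary Yang–Baxter equation ζ_k ∘ ξ_k ∘ η_k = η_k ∘ ξ_k ∘ ζ_{k+1} holds, then ζ₁ ∘ (ξ₁ ∘ ⋯ ∘ ξ_m) ∘ (η₁ ∘ ⋯ ∘ η_m) = (η₁ ∘ ⋯ ∘ η_m) ∘ (ξ₁ ∘ ⋯ ∘ ξ_m) ∘ ζ₁. -/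
/-! The Yang–Baxter relation `ζ_k ξ_k η_k = η_k ξ_k ζ_{k+1}` lets `ζ` pass the `k`-th
"carriage" `ξ_k η_k` of the train, turning into `ζ_{k+1}`.  After peeling off the first
carriage (`η₁` slides left past `ξ₂ ⋯ ξ_m`), induction moves `ζ₂` through the remaining ones,
and `ξ₁` slides right past `η₂ ⋯ η_m`; finally `ζ_{m+1} = ζ₁`. -/

theorem Commute.list_prod_ofFn_right {M : Type*} [Monoid M] {a : M} {n : ℕ} {f : Fin n → M}
    (h : ∀ j, Commute a (f j)) : Commute a (List.ofFn f).prod :=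
  Commute.list_prod_right _ _ fun _ hx => by
    obtain ⟨j, rfl⟩ := List.mem_ofFn.mp hx
    exact h j

theorem train_argument {M : Type*} [Monoid M] (m : ℕ)
    (ζ : Fin (m + 1) → M) (ξ η : Fin m → M)
    (hcomm : ∀ j k : Fin m, j ≠ k → ξ j * η k = η k * ξ j)
    (hYBE : ∀ k : Fin m, ζ k.castSucc * ξ k * η k = η k * ξ k * ζ k.succ) :
    ζ 0 * (List.ofFn ξ).prod * (List.ofFn η).prod =
      (List.ofFn η).prod * (List.ofFn ξ).prod * ζ (Fin.last m) := by
  induction m with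
  | zero => simp [Fin.last]
  | succ n ih =>
    set P := (List.ofFn fun k : Fin n => ξ k.succ).prod
    set Q := (List.ofFn fun k : Fin n => η k.succ).prod
    have tail : ζ 1 * P * Q = Q * P * ζ (Fin.last (n + 1)) := by
      simpa [Fin.succ_last] using ih (fun k => ζ k.succ) (fun k => ξ k.succ) (fun k => η k.succ)
        (fun j k hjk => hcomm j.succ k.succ (Fin.succ_injective _ |>.ne hjk))
        (fun k => by simpa only [Fin.succ_castSucc] using hYBE k.succ)
    have head : ζ 0 * ξ 0 * η 0 = η 0 * ξ 0 * ζ 1 := hYBE 0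
    have hηP : Commute (η 0) P :=
      Commute.list_prod_ofFn_right fun j => (hcomm j.succ 0 (Fin.succ_ne_zero j)).symm
    have hξQ : Commute (ξ 0) Q :=
      Commute.list_prod_ofFn_right fun j => hcomm 0 j.succ (Fin.succ_ne_zero j).symm
    rw [List.ofFn_succ, List.ofFn_succ, List.prod_cons, List.prod_cons]
    calc ζ 0 * (ξ 0 * P) * (η 0 * Q)
        = ζ 0 * ξ 0 * η 0 * P * Q := by
          simp only [mul_assoc, ← hηP.left_comm]
      _ = η 0 * ξ 0 * (ζ 1 * P * Q) := by rw [head]; simp only [mul_assoc]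
      _ = η 0 * ξ 0 * (Q * P * ζ (Fin.last (n + 1))) := by rw [tail]
      _ = η 0 * Q * (ξ 0 * P) * ζ (Fin.last (n + 1)) := by
          simp only [mul_assoc, hξQ.left_comm]

/-- fusion lemma / train argument.
Let `E = U ⊗ V ⊗ W₁ ⊗ ⋯ ⊗ W_m` and regard `ζ₁, …, ζ_{m+1} ∈ End(U ⊗ V)` (with
`ζ_{m+1} = ζ₁`), `ξ_k ∈ End(U ⊗ W_k)` and `η_k ∈ End(V ⊗ W_k)` as endomorphisms of `E`
acting as the identity on the tensor factors not indicated.  Operators supported on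
disjoint sets of tensor factors commute; in particular `ξ_j` and `η_k` commute whenever
`j ≠ k` (they share no tensor factor), which is recorded as the hypothesis `hcomm`.
If the auxiliary Yang–Baxter equations `ζ_k ∘ ξ_k ∘ η_k = η_k ∘ ξ_k ∘ ζ_{k+1}`
hold for `1 ≤ k ≤ m`, then
`ζ₁ ∘ (ξ₁ ∘ ⋯ ∘ ξ_m) ∘ (η₁ ∘ ⋯ ∘ η_m) = (η₁ ∘ ⋯ ∘ η_m) ∘ (ξ₁ ∘ ⋯ ∘ ξ_m) ∘ ζ₁`.

Here `ζ` is indexed by `Fin (m+1)` (so `ζ 0 = ζ₁` and `ζ (Fin.last m) = ζ_{m+1}`),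
composition of a list of endomorphisms is `List.prod` (so
`(List.ofFn ξ).prod = ξ₁ ∘ ⋯ ∘ ξ_m`), and multiplication of endomorphisms is
composition. -/
theorem train_argument_fused_yang_baxter
    (E : Type*) [AddCommGroup E] [Module ℂ E] (m : ℕ)
    (ζ : Fin (m + 1) → Module.End ℂ E) (ξ η : Fin m → Module.End ℂ E)
    (hζ : ζ (Fin.last m) = ζ 0)
    (hcomm : ∀ j k : Fin m, j ≠ k → ξ j * η k = η k * ξ j)
    (hYBE : ∀ k : Fin m,
      ζ k.castSucc * ξ k * η k = η k * ξ k * ζ k.succ) :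
    ζ 0 * (List.ofFn ξ).prod * (List.ofFn η).prod =
      (List.ofFn η).prod * (List.ofFn ξ).prod * ζ 0 := by
  simpa only [hζ] using train_argument m ζ ξ η hcomm hYBE
end

section
/- Uniqueness and evaluation of the ground state: let w ∈ S_r and let λ ∈ ℤ^r be w-almost dominant with λ_r ≥ 0. Then the Iwahori system 𝔖_{z,λ,w,w} has exactly one admissible state, and its partition function equals v^{ℓ(w)}·∏_{i=1}^{r} z_i^{λ_i + r − i}, where ℓ(w) is the number of inversions of w. -/
noncomputable section
open scoped Classical

/-- A horizontal spin: `none` is `+`, `some c` is the color `c` (colors are integers,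
with their usual order). -/
abbrev HS := Option ℤ

/-- The fused Boltzmann weight `wt_z(a, Σ; b, Σ′)` of a vertex with left horizontal
spin `a`, top vertical spin `Σ`, right horizontal spin `b` and bottom vertical
spin `Σ′`; the five admissible configurations have the indicated weights,
and all other configurations have weight `0`. -/
def fusedWt (v z : ℂ) (a : HS) (S : Finset ℤ) (b : HS) (S' : Finset ℤ) : ℂ :=
  match a, b with
  | none, none => if S' = S then (-v) ^ S.card else 0
  | none, some c =>
      if c ∈ S ∧ S' = S.erase c then
        (-v) ^ (S.filter (fun e => e < c)).card * v ^ (S.filter (fun e => c < e)).card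
      else 0
  | some c, none =>
      if c ∉ S ∧ S' = insert c S then
        (1 - v) * z * (-v) ^ (S.filter (fun e => c < e)).card
      else 0
  | some c, some d =>
      if c = d then (if S' = S then z * v ^ (S.filter (fun e => c < e)).card else 0)
      else if c ∉ S ∧ d ∈ S ∧ c < d ∧ S' = (insert c S).erase d then
        (1 - v) * z * (-v) ^ (S.filter (fun e => c < e ∧ e < d)).card *
          v ^ (S.filter (fun e => d < e)).card
      else 0

/-- The five admissible vertex configurations `(a, Σ; b, Σ′)`
(left, top; right, bottom). -/
def AdmissibleCfg (a : HS) (S : Finset ℤ) (b : HS) (S' : Finset ℤ) : Prop :=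
  (a = none ∧ b = none ∧ S' = S) ∨
  (∃ c : ℤ, a = some c ∧ b = some c ∧ S' = S) ∨
  (∃ c : ℤ, a = none ∧ b = some c ∧ c ∈ S ∧ S' = S.erase c) ∨
  (∃ c : ℤ, a = some c ∧ b = none ∧ c ∉ S ∧ S' = insert c S) ∨
  (∃ c d : ℤ, a = some c ∧ b = some d ∧ c ∉ S ∧ d ∈ S ∧ c < d ∧
    S' = (insert c S).erase d)

/-- A state of the rectangular grid with `r` rows (numbered `1,…,r` top to bottom,
here `0`-indexed by `Fin r`) and `N+1` columns (numbered `N, N−1, …, 0` from left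
to right; we index columns by their column number `m : Fin (N+1)`, so the column
to the *left* of column `m` is column `m+1`).

The first component assigns a spin to each horizontal edge: `h i e` for
`e : Fin (N+2)` is the horizontal edge of row `i` lying immediately to the right
of column `e` when `e < N+1`; thus the vertex in row `i` and column `m` has left
horizontal edge `h i m.succ` and right horizontal edge `h i m.castSucc`,
`h i (Fin.last (N+1))` is the left boundary edge and `h i 0` the right boundary
edge of row `i`.

The second component assigns a finite set of colors to each vertical edge:
`vt m j` for `j : Fin (r+1)` is the vertical edge of column `m` lying above row
`j` when `j < r`; thus the vertex in row `i` and column `m` has top vertical edge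
`vt m i.castSucc` and bottom vertical edge `vt m i.succ`, `vt m 0` is the top
boundary edge and `vt m (Fin.last r)` the bottom boundary edge of column `m`. -/
abbrev GState (r N : ℕ) :=
  (Fin r → Fin (N + 2) → HS) × (Fin (N + 1) → Fin (r + 1) → Finset ℤ)

/-- A state is a *valid (admissible) state of the system with top boundary `top`
and right boundary `right`* if: all left boundary spins are `+`, all bottom
boundary spins are `∅`, the top and right boundary spins are as prescribed, and
every vertex configuration is admissible. -/
def ValidState (r N : ℕ) (top : Fin (N + 1) → Finset ℤ) (right : Fin r → HS)
    (s : GState r N) : Prop :=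
  (∀ i, s.1 i (Fin.last (N + 1)) = none) ∧
  (∀ i, s.1 i 0 = right i) ∧
  (∀ m, s.2 m 0 = top m) ∧
  (∀ m, s.2 m (Fin.last r) = ∅) ∧
  (∀ (i : Fin r) (m : Fin (N + 1)),
    AdmissibleCfg (s.1 i m.succ) (s.2 m i.castSucc) (s.1 i m.castSucc) (s.2 m i.succ))

/-- The Boltzmann weight `β(s)` of a state: the product over all vertices of the
fused weights, the vertices of row `i` carrying the parameter `z_i`. -/
def boltz (r N : ℕ) (v : ℂ) (z : Fin r → ℂ) (s : GState r N) : ℂ :=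
  ∏ i : Fin r, ∏ m : Fin (N + 1),
    fusedWt v (z i) (s.1 i m.succ) (s.2 m i.castSucc) (s.1 i m.castSucc) (s.2 m i.succ)

/-- The partition function: the sum of `β(s)` over all admissible states of the
system (a finite sum: only finitely many states are admissible). -/
def Zsys (r N : ℕ) (v : ℂ) (z : Fin r → ℂ) (top : Fin (N + 1) → Finset ℤ)
    (right : Fin r → HS) : ℂ :=
  ∑ᶠ s : GState r N, if ValidState r N top right s then boltz r N v z s else 0

/-- The top boundary of the system attached to the flag `γ`: the vertical spin in
column `m` is `{γ_{w₂⁻¹(i)} : λ_i + r − i = m}` (all indices `0`-indexed, so the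
column number of `i` is `λ_i + (r − 1 − i) = λ_i + Fin.rev i`). -/
def flagTop (r N : ℕ) (γ lam : Fin r → ℤ) (w₂ : Equiv.Perm (Fin r))
    (m : Fin (N + 1)) : Finset ℤ :=
  (Finset.univ.filter
      (fun i : Fin r => lam i + ((Fin.rev i : ℕ) : ℤ) = (m : ℤ))).image
    (fun i => γ (w₂⁻¹ i))

/-- The right boundary of the system attached to the flag `γ`: the horizontal spin
in row `i` is the color `γ_{w₁⁻¹(i)}`. -/
def flagRight (r : ℕ) (γ : Fin r → ℤ) (w₁ : Equiv.Perm (Fin r)) (i : Fin r) : HS :=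
  some (γ (w₁⁻¹ i))

/-- The partition function `Z(𝔖^γ_{z,λ,w₁,w₂})` of the parahoric system attached to
the flag `γ`. -/
def Zflag (r N : ℕ) (v : ℂ) (z : Fin r → ℂ) (γ lam : Fin r → ℤ)
    (w₁ w₂ : Equiv.Perm (Fin r)) : ℂ :=
  Zsys r N v z (flagTop r N γ lam w₂) (flagRight r γ w₁)

/-- The standard flag `γ_i = r + 1 − i` (so that `γ_{w⁻¹(i)} = r + 1 − w⁻¹(i)`);
`0`-indexed, `stdFlag r i = r − i`. -/
def stdFlag (r : ℕ) (i : Fin r) : ℤ := (r : ℤ) - (i : ℤ)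

/-- The partition function `Z(𝔖_{z,λ,w₁,w₂})` of the Iwahori system: colors
`{1,…,r}`, top spin in column `λ_i + r − i` equal to `{r+1−w₂⁻¹(i)}` and right
spin in row `i` equal to `r+1−w₁⁻¹(i)`. -/
def ZIw (r N : ℕ) (v : ℂ) (z : Fin r → ℂ) (lam : Fin r → ℤ)
    (w₁ w₂ : Equiv.Perm (Fin r)) : ℂ :=
  Zflag r N v z (stdFlag r) lam w₁ w₂

/-- The Coxeter length (number of inversions) on `S_r`. -/
def invLen {r : ℕ} (w : Equiv.Perm (Fin r)) : ℕ :=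
  (Finset.univ.filter (fun p : Fin r × Fin r => p.1 < p.2 ∧ w p.2 < w p.1)).card

/-- `λ` is `w`-almost dominant. -/
def AlmostDominant {r : ℕ} (w : Equiv.Perm (Fin r)) (lam : Fin r → ℤ) : Prop :=
  ∀ (i : ℕ) (h : i + 1 < r),
    (w⁻¹ ⟨i, by omega⟩ < w⁻¹ ⟨i + 1, h⟩ → lam ⟨i + 1, h⟩ ≤ lam ⟨i, by omega⟩) ∧
    (w⁻¹ ⟨i + 1, h⟩ < w⁻¹ ⟨i, by omega⟩ → lam ⟨i + 1, h⟩ ≤ lam ⟨i, by omega⟩ + 1)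

/-!
Work through the rows from top to bottom. Row `i` must deliver its color `c_i = r + 1 - w⁻¹(i)`
to the right boundary, and a color can enter a row only from a vertical edge containing it.
Almost dominance makes the columns `λ_i + r - i` weakly decrease down the rows, so among the
colors still travelling down, `c_i` sits only in column `λ_i + r - i` and nothing sits further
left. Hence the row is forced: `+` up to that column, where `c_i` is picked up, and `c_i` from
there to the right boundary. For the weight, row `i` collects `z_i` at each of the
`λ_i + r - i` vertices where it carries `c_i` and `v` for every larger color it passes;
no smaller color shares the pick-up column (again by almost dominance), so no `-v` occurs, and
the pairs (row, larger color passed) are exactly the inversions of `w`.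
-/

namespace IwahoriGroundState

open Finset

/-- Row spins `c` on the edges to the right of column `M` and `+` on those to its left. -/
def rowH {k : ℕ} (c : ℤ) (M : ℕ) (e : Fin k) : HS := if (e : ℕ) ≤ M then some c else none

section Vertex

variable {a b : HS} {S S' : Finset ℤ} {c : ℤ}

lemma AdmissibleCfg.eq_none_of_empty (h : AdmissibleCfg none ∅ b S') : b = none :=
  (by simpa [AdmissibleCfg] using h : b = none ∧ S' = ∅).1

lemma AdmissibleCfg.eq_some_or_mem (h : AdmissibleCfg a S (some c) S') :
    a = some c ∨ c ∈ S := by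
  rcases h with ⟨-, h, -⟩ | ⟨d, ha, hb, -⟩ | ⟨d, -, hb, hd, -⟩ | ⟨d, -, h, -⟩ |
    ⟨d, e, -, hb, -, he, -⟩ <;> simp_all

lemma admissibleCfg_rowH_iff {k M : ℕ} {m : Fin k} (hc : c ∈ S ↔ (m : ℕ) = M) :
    AdmissibleCfg (rowH c M m.succ) S (rowH c M m.castSucc) S' ↔ S' = S.erase c := by
  rcases lt_trichotomy (m : ℕ) M with hm | hm | hm
  · have hcS : c ∉ S := fun h => hm.ne (hc.1 h)
    simp [AdmissibleCfg, rowH, hm.le, Nat.succ_le_of_lt hm, erase_eq_of_notMem hcS]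
  · simp [AdmissibleCfg, rowH, hm, hc]
  · have hcS : c ∉ S := fun h => hm.ne' (hc.1 h)
    simp [AdmissibleCfg, rowH, not_le.2 hm, not_le.2 (Nat.lt_succ_of_lt hm),
      erase_eq_of_notMem hcS]

end Vertex

theorem eq_rowH_of_admissible {n M : ℕ} {c : ℤ} {h : Fin (n + 2) → HS}
    {T B : Fin (n + 1) → Finset ℤ} (hc : ∀ m, c ∈ T m ↔ (m : ℕ) = M)
    (hT : ∀ m : Fin (n + 1), M < m → T m = ∅) (hleft : h (Fin.last _) = none)
    (hright : h 0 = some c) (hadm : ∀ m, AdmissibleCfg (h m.succ) (T m) (h m.castSucc) (B m)) :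
    h = rowH c M ∧ ∀ m, B m = (T m).erase c := by
  have hplus : ∀ e : Fin (n + 2), M < e → h e = none := by
    intro e
    induction e using Fin.reverseInduction with
    | last => exact fun _ => hleft
    | cast m ih =>
      intro hm
      have hm : M < m := by simpa using hm
      have := hadm m
      rw [ih (by simp; omega), hT m hm] at this
      exact AdmissibleCfg.eq_none_of_empty this
  have hcolor : ∀ e : Fin (n + 2), (e : ℕ) ≤ M → h e = some c := by
    intro e
    induction e using Fin.induction with
    | zero => exact fun _ => hright
    | succ m ih =>
      intro hm
      have hm : (m : ℕ) < M := by simpa using hm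
      have := hadm m
      rw [ih (by simp; omega)] at this
      exact (AdmissibleCfg.eq_some_or_mem this).resolve_right fun h => hm.ne ((hc m).1 h)
  have hrow : h = rowH c M := funext fun e => by
    unfold rowH
    split_ifs with he
    exacts [hcolor e he, hplus e (not_le.1 he)]
  subst hrow
  exact ⟨rfl, fun m => (admissibleCfg_rowH_iff (hc m)).1 (hadm m)⟩

lemma fusedWt_rowH (v z : ℂ) {k M : ℕ} {m : Fin k} {c : ℤ} {S : Finset ℤ}
    (hc : c ∈ S ↔ (m : ℕ) = M) (hmin : (m : ℕ) = M → ∀ e ∈ S, c ≤ e)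
    (hempty : M < m → S = ∅) :
    fusedWt v z (rowH c M m.succ) S (rowH c M m.castSucc) (S.erase c) =
      (if (m : ℕ) < M then z else 1) * v ^ #{e ∈ S | c < e} := by
  rcases lt_trichotomy (m : ℕ) M with hm | hm | hm
  · have hcS : c ∉ S := fun h => hm.ne (hc.1 h)
    simp [fusedWt, rowH, hm, hm.le, Nat.succ_le_of_lt hm, erase_eq_of_notMem hcS]
  · have hlow : #{e ∈ S | e < c} = 0 := by
      simpa [filter_eq_empty_iff] using hmin hm
    simp [fusedWt, rowH, hm, hc, hlow]
  · simp [fusedWt, rowH, not_le.2 hm, not_le.2 (Nat.lt_succ_of_lt hm), hm.not_gt, hempty hm]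

lemma prod_fusedWt_rowH (v z : ℂ) {n M : ℕ} {c : ℤ} {T : Fin (n + 1) → Finset ℤ}
    (hM : M ≤ n) (hc : ∀ m, c ∈ T m ↔ (m : ℕ) = M)
    (hmin : ∀ m : Fin (n + 1), (m : ℕ) = M → ∀ e ∈ T m, c ≤ e)
    (hT : ∀ m : Fin (n + 1), M < m → T m = ∅) :
    ∏ m, fusedWt v z (rowH c M m.succ) (T m) (rowH c M m.castSucc) ((T m).erase c) =
      z ^ M * v ^ ∑ m, #{e ∈ T m | c < e} := by
  rw [prod_congr rfl fun m _ => fusedWt_rowH v z (hc m) (hmin m) (hT m), prod_mul_distrib,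
    prod_ite, prod_const, prod_const_one, mul_one, Fin.card_filter_val_lt,
    min_eq_right (by omega), prod_pow_eq_pow_sum]

variable {r N : ℕ} {lam : Fin r → ℤ} {w : Equiv.Perm (Fin r)}

def col (lam : Fin r → ℤ) (i : Fin r) : ℤ := lam i + ((Fin.rev i : ℕ) : ℤ)

def color (w : Equiv.Perm (Fin r)) (i : Fin r) : ℤ := stdFlag r (w⁻¹ i)

/-- Almost dominance amounts to this key strictly increasing down the rows. -/
def rowKey (lam : Fin r → ℤ) (w : Equiv.Perm (Fin r)) (i : Fin r) : ℤ ×ₗ ℤ :=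
  toLex (-col lam i, color w i)

lemma color_lt_color_iff {a b : Fin r} : color w a < color w b ↔ w⁻¹ b < w⁻¹ a := by
  rw [color, color, stdFlag, stdFlag, sub_lt_sub_iff_left, Nat.cast_lt, Fin.lt_def]

lemma color_injective (w : Equiv.Perm (Fin r)) : Function.Injective (color w) := by
  intro a b h
  simpa [color, stdFlag, Fin.val_inj] using h

theorem AlmostDominant.strictMono_rowKey (hdom : AlmostDominant w lam) :
    StrictMono (rowKey lam w) := by
  obtain _ | n := r
  · exact fun a => a.elim0
  rw [Fin.strictMono_iff_lt_succ]
  intro i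
  obtain ⟨hlt, hgt⟩ := hdom i (by omega)
  change w⁻¹ i.castSucc < w⁻¹ i.succ → lam i.succ ≤ lam i.castSucc at hlt
  change w⁻¹ i.succ < w⁻¹ i.castSucc → lam i.succ ≤ lam i.castSucc + 1 at hgt
  have hrev : ((Fin.rev i.castSucc : ℕ) : ℤ) = (Fin.rev i.succ : ℕ) + 1 := by
    simp only [Fin.val_rev, Fin.val_castSucc, Fin.val_succ]
    omega
  simp only [rowKey, Prod.Lex.toLex_lt_toLex', col, color_lt_color_iff, hrev]
  rcases lt_or_gt_of_ne (w⁻¹.injective.ne (Fin.castSucc_lt_succ (i := i)).ne) with h | h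
  · have := hlt h
    exact ⟨by omega, fun _ => by omega⟩
  · have := hgt h
    exact ⟨by omega, fun _ => h⟩

variable (N lam w) in
def groundV (m : Fin (N + 1)) (j : Fin (r + 1)) : Finset ℤ :=
  ({a | col lam a = (m : ℤ) ∧ (j : ℕ) ≤ a} : Finset (Fin r)).image (color w)

variable (N lam w) in
def groundState : GState r N :=
  (fun i => rowH (color w i) (col lam i).toNat, groundV N lam w)

lemma mem_groundV {m : Fin (N + 1)} {j : Fin (r + 1)} {x : ℤ} :
    x ∈ groundV N lam w m j ↔ ∃ a, col lam a = (m : ℤ) ∧ (j : ℕ) ≤ a ∧ color w a = x := by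
  simp [groundV, and_assoc]

lemma groundV_zero (m : Fin (N + 1)) :
    groundV N lam w m 0 = flagTop r N (stdFlag r) lam w m := by
  simp only [groundV, flagTop, col, Fin.val_zero, zero_le, and_true]
  rfl

lemma groundV_last (m : Fin (N + 1)) : groundV N lam w m (Fin.last r) = ∅ := by
  simp [groundV]

lemma groundV_succ (m : Fin (N + 1)) (i : Fin r) :
    groundV N lam w m i.succ = (groundV N lam w m i.castSucc).erase (color w i) := by
  ext x
  simp only [mem_erase, mem_groundV, Fin.val_succ, Fin.val_castSucc]
  constructor
  · rintro ⟨a, ha, hia, rfl⟩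
    exact ⟨fun h => by cases color_injective w h; omega, a, ha, by omega, rfl⟩
  · rintro ⟨hne, a, ha, hia, rfl⟩
    have : a ≠ i := by rintro rfl; exact hne rfl
    exact ⟨a, ha, by omega, rfl⟩

lemma color_mem_groundV_iff {i : Fin r} (h0 : 0 ≤ col lam i) {m : Fin (N + 1)} :
    color w i ∈ groundV N lam w m i.castSucc ↔ (m : ℕ) = (col lam i).toNat := by
  rw [mem_groundV]
  constructor
  · rintro ⟨a, ha, -, hai⟩
    cases color_injective w hai
    omega
  · exact fun hm => ⟨i, by omega, le_rfl, rfl⟩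

theorem groundState_valid (h0 : ∀ i, 0 ≤ col lam i) (hN : ∀ i, col lam i ≤ N) :
    ValidState r N (flagTop r N (stdFlag r) lam w) (flagRight r (stdFlag r) w)
      (groundState N lam w) := by
  refine ⟨fun i => ?_, fun i => ?_, groundV_zero, groundV_last, fun i m => ?_⟩
  · have := hN i
    simp only [groundState, rowH, Fin.val_last]
    exact if_neg (by omega)
  · simp [groundState, rowH, flagRight, color]
  · exact (admissibleCfg_rowH_iff (color_mem_groundV_iff (h0 i))).2 (groundV_succ m i)

lemma card_filter_groundV (m : Fin (N + 1)) (i : Fin r) :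
    #{x ∈ groundV N lam w m i.castSucc | color w i < x} =
      #{a | col lam a = (m : ℤ) ∧ i < a ∧ w⁻¹ a < w⁻¹ i} := by
  rw [groundV, filter_image, card_image_of_injective _ (color_injective w), filter_filter]
  congr 1
  refine filter_congr fun a _ => ?_
  rw [color_lt_color_iff, Fin.val_castSucc]
  constructor
  · rintro ⟨⟨ha, hia⟩, hw⟩
    refine ⟨ha, Fin.lt_def.2 (hia.lt_of_ne fun h => ?_), hw⟩
    rw [Fin.ext h] at hw
    exact lt_irrefl _ hw
  · rintro ⟨ha, hia, hw⟩
    exact ⟨⟨ha, hia.le⟩, hw⟩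

lemma sum_card_filter_groundV (h0 : ∀ i, 0 ≤ col lam i) (hN : ∀ i, col lam i ≤ N)
    (i : Fin r) :
    ∑ m, #{x ∈ groundV N lam w m i.castSucc | color w i < x} =
      #{a | i < a ∧ w⁻¹ a < w⁻¹ i} := by
  simp_rw [card_filter_groundV]
  rw [card_eq_sum_card_fiberwise (f := fun a => (col lam a).toNat) (t := range (N + 1))
    fun a _ => by have := h0 a; have := hN a; simp; omega,
    ← Fin.sum_univ_eq_sum_range]
  refine sum_congr rfl fun m _ => congrArg card (ext fun a => ?_)
  have := h0 a
  simp only [mem_filter, mem_univ, true_and]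
  constructor
  · rintro ⟨ha, hp⟩; exact ⟨hp, by omega⟩
  · rintro ⟨hp, ha⟩; exact ⟨by omega, hp⟩

lemma sum_card_inversions (w : Equiv.Perm (Fin r)) :
    ∑ i, #{a | i < a ∧ w⁻¹ a < w⁻¹ i} = invLen w := by
  have hinv : invLen w = #{p : Fin r × Fin r | p.1 < p.2 ∧ w⁻¹ p.2 < w⁻¹ p.1} := by
    refine card_nbij' (fun p => (w p.2, w p.1)) (fun p => (w⁻¹ p.2, w⁻¹ p.1)) ?_ ?_ ?_ ?_ <;>
      intro p hp <;> simp_all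
  simp only [hinv, card_filter, Fintype.sum_prod_type]

section Key

variable (hkey : StrictMono (rowKey lam w))
include hkey

lemma col_le_col_of_le {a b : Fin r} (hab : a ≤ b) : col lam b ≤ col lam a := by
  have := hkey.monotone hab
  rw [rowKey, rowKey, Prod.Lex.toLex_le_toLex'] at this
  exact neg_le_neg_iff.1 this.1

lemma color_lt_of_col_eq {a b : Fin r} (hab : a < b) (h : col lam a = col lam b) :
    color w a < color w b := by
  have := hkey hab
  rw [rowKey, rowKey, Prod.Lex.toLex_lt_toLex'] at this
  exact this.2 (by rw [h])

lemma col_nonneg (hlast : ∀ h : 0 < r, 0 ≤ lam ⟨r - 1, Nat.sub_lt h one_pos⟩) (i : Fin r) :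
    0 ≤ col lam i := by
  have hi := i.isLt
  have hle := col_le_col_of_le hkey
    (show i ≤ ⟨r - 1, by omega⟩ from Fin.le_def.2 (by simp; omega))
  have := hlast (by omega)
  simp only [col, Fin.val_rev] at hle ⊢
  omega

lemma col_le (hN : ∀ h : 0 < r, lam ⟨0, h⟩ + (r : ℤ) - 1 ≤ (N : ℤ)) (i : Fin r) :
    col lam i ≤ N := by
  have hi := i.isLt
  have hle := col_le_col_of_le hkey (show ⟨0, by omega⟩ ≤ i from Fin.le_def.2 (by simp))
  have := hN (by omega)
  simp only [col, Fin.val_rev] at hle ⊢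
  omega

lemma groundV_eq_empty {i : Fin r} {m : Fin (N + 1)} (hm : (col lam i).toNat < m) :
    groundV N lam w m i.castSucc = ∅ := by
  refine eq_empty_of_forall_notMem fun x hx => ?_
  obtain ⟨a, ha, hia, -⟩ := mem_groundV.1 hx
  have := col_le_col_of_le hkey (Fin.le_def.2 hia)
  omega

lemma color_le_of_mem_groundV {i : Fin r} (h0 : 0 ≤ col lam i) {m : Fin (N + 1)}
    (hm : (m : ℕ) = (col lam i).toNat) {x : ℤ} (hx : x ∈ groundV N lam w m i.castSucc) :
    color w i ≤ x := by
  obtain ⟨a, ha, hia, rfl⟩ := mem_groundV.1 hx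
  rcases (Fin.le_def.2 (by simpa using hia) : i ≤ a).lt_or_eq with hia | rfl
  · exact (color_lt_of_col_eq hkey hia (by omega)).le
  · exact le_rfl

theorem eq_groundState_of_valid (h0 : ∀ i, 0 ≤ col lam i) {s : GState r N}
    (hs : ValidState r N (flagTop r N (stdFlag r) lam w) (flagRight r (stdFlag r) w) s) :
    s = groundState N lam w := by
  obtain ⟨hleft, hright, htop, -, hadm⟩ := hs
  have hrow (i : Fin r) (hi : ∀ m, s.2 m i.castSucc = groundV N lam w m i.castSucc) :
      s.1 i = rowH (color w i) (col lam i).toNat ∧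
        ∀ m, s.2 m i.succ = groundV N lam w m i.succ := by
    obtain ⟨hh, hb⟩ := eq_rowH_of_admissible (fun m => color_mem_groundV_iff (h0 i))
      (fun m => groundV_eq_empty hkey) (hleft i) (hright i) fun m => hi m ▸ hadm i m
    exact ⟨hh, fun m => (hb m).trans (groundV_succ m i).symm⟩
  have hvert (j : Fin (r + 1)) : ∀ m, s.2 m j = groundV N lam w m j := by
    induction j using Fin.induction with
    | zero => exact fun m => (htop m).trans (groundV_zero m).symm
    | succ i ih => exact (hrow i ih).2
  exact Prod.ext (funext fun i => (hrow i fun m => hvert _ m).1)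
    (funext fun m => funext fun j => hvert j m)

theorem boltz_groundState (h0 : ∀ i, 0 ≤ col lam i) (hN : ∀ i, col lam i ≤ N)
    (v : ℂ) (z : Fin r → ℂ) :
    boltz r N v z (groundState N lam w) = v ^ invLen w * ∏ i, z i ^ col lam i := by
  have hrow (i : Fin r) : ∏ m : Fin (N + 1), fusedWt v (z i)
      (rowH (color w i) (col lam i).toNat m.succ) (groundV N lam w m i.castSucc)
      (rowH (color w i) (col lam i).toNat m.castSucc) (groundV N lam w m i.succ) =
      z i ^ col lam i * v ^ #{a | i < a ∧ w⁻¹ a < w⁻¹ i} := by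
    simp only [groundV_succ]
    rw [prod_fusedWt_rowH v (z i) (by have := h0 i; have := hN i; omega)
      (fun m => color_mem_groundV_iff (h0 i)) (fun m => color_le_of_mem_groundV hkey (h0 i))
      (fun m => groundV_eq_empty hkey), sum_card_filter_groundV h0 hN,
      ← zpow_natCast, Int.toNat_of_nonneg (h0 i)]
  calc boltz r N v z (groundState N lam w)
      = ∏ i, (z i ^ col lam i * v ^ #{a | i < a ∧ w⁻¹ a < w⁻¹ i}) :=
        prod_congr rfl fun i _ => hrow i
    _ = v ^ invLen w * ∏ i, z i ^ col lam i := by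
      rw [prod_mul_distrib, prod_pow_eq_pow_sum, sum_card_inversions, mul_comm]

end Key

end IwahoriGroundState

open IwahoriGroundState

/-- Uniqueness and evaluation of the ground state: if `λ ∈ ℤ^r` is
`w`-almost dominant with `λ_r ≥ 0`, then the Iwahori system `𝔖_{z,λ,w,w}` has
exactly one admissible state, and its partition function equals
`v^{ℓ(w)} · ∏_{i=1}^{r} z_i^{λ_i + r − i}`. -/
theorem iwahori_ground_state
    (r N : ℕ) (w : Equiv.Perm (Fin r)) (lam : Fin r → ℤ)
    (hdom : AlmostDominant w lam)
    (hlam_last : ∀ h : 0 < r, 0 ≤ lam ⟨r - 1, by omega⟩)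
    (hN : ∀ h : 0 < r, lam ⟨0, h⟩ + (r : ℤ) - 1 ≤ (N : ℤ))
    (v : ℂ) (z : Fin r → ℂ) :
    (∃! s : GState r N,
        ValidState r N (flagTop r N (stdFlag r) lam w) (flagRight r (stdFlag r) w) s) ∧
    ZIw r N v z lam w w =
      v ^ invLen w * ∏ i : Fin r, z i ^ (lam i + ((Fin.rev i : ℕ) : ℤ)) := by
  have hkey := hdom.strictMono_rowKey
  have h0 := col_nonneg hkey hlam_last
  have hcolN := col_le hkey hN
  have hvalid := groundState_valid (w := w) h0 hcolN
  have huniq (s : GState r N) := eq_groundState_of_valid hkey h0 (s := s)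
  refine ⟨⟨groundState N lam w, hvalid, huniq⟩, ?_⟩
  rw [ZIw, Zflag, Zsys, finsum_eq_single _ (groundState N lam w)
    fun s hs => if_neg (mt (huniq s) hs), if_pos hvalid]
  exact boltz_groundState hkey h0 hcolN v z
end
end

section
/- Let (W,S) be a Coxeter system, J a subset of the index set of the simple reflections, W_J the subgroup generated by {s_j : j ∈ J}, and W^J = {w ∈ W : ℓ(w s_j) > ℓ(w) for all j ∈ J}. If w ∈ W^J and s_i is a simple reflection such that w⁻¹ s_i w ∉ W_J, then s_i w ∈ W^J. -/
/-!
Bourbaki's sign representation of `W` on `W × ZMod 2`, in which `s_i` sends `(t, ε)` to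
`(s_i t s_i, ε + [t = s_i])`, shows that the parity of the number of occurrences of `x` in the
left inversion sequence of a word depends only on the product of the word. For a left descent
`s_i` of `π ω`, comparing `ω` with a word `i :: ψ`, `ψ` reduced, gives an odd count of `s_i`,
so `s_i` occurs in the left inversion sequence of `ω`.

If `ℓ(s_i w s_j) < ℓ(s_i w)` with `ℓ(w s_j) > ℓ(w)`, the lengths force `s_i` to be a left descent
of `w s_j` but not of `w`. For a reduced word `ω` of `w`, `s_i` lies in the left inversion
sequence of `ω ++ [j]` but not in that of `ω`, so it is the last entry `w s_j w⁻¹`, and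
`w⁻¹ s_i w = s_j ∈ W_J`.
-/

namespace CoxeterSystem

variable {B W : Type*} [Group W] {M : CoxeterMatrix B} (cs : CoxeterSystem M W)

theorem prod_map_alternatingWord_two_mul {G : Type*} [Monoid G] (f : B → G) (i i' : B) (p : ℕ) :
    ((alternatingWord i i' (2 * p)).map f).prod = (f i * f i') ^ p := by
  induction p with
  | zero => simp [alternatingWord]
  | succ p ih =>
    rw [show 2 * (p + 1) = 2 * p + 1 + 1 by ring, alternatingWord_succ', alternatingWord_succ']
    simp [ih, pow_succ', mul_assoc]

theorem leftInvSeq_alternatingWord_two_mul_eq_append_self (i i' : B) :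
    cs.leftInvSeq (alternatingWord i i' (2 * M i i')) =
      (List.range (M i i')).map (fun k ↦ cs.simple i * (cs.simple i' * cs.simple i) ^ k) ++
        (List.range (M i i')).map (fun k ↦ cs.simple i * (cs.simple i' * cs.simple i) ^ k) := by
  have hentries : cs.leftInvSeq (alternatingWord i i' (2 * M i i')) =
      (List.range (M i i' + M i i')).map
        (fun k ↦ cs.simple i * (cs.simple i' * cs.simple i) ^ k) := by
    refine List.ext_getElem (by simp; ring) fun k hk _ ↦ ?_
    simp only [length_leftInvSeq, length_alternatingWord] at hk
    rw [getElem_leftInvSeq_alternatingWord cs i i' _ k hk, prod_alternatingWord_eq_mul_pow]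
    simp [Nat.not_even_bit1, Nat.mul_add_div]
  rw [hentries, List.range_add, List.map_append, List.map_map]
  congr 2
  ext k
  simp [pow_add]

section SignRepresentation

variable [DecidableEq W]

def signPerm (i : B) : Equiv.Perm (W × ZMod 2) :=
  Function.Involutive.toPerm
    (fun p ↦ (cs.simple i * p.1 * cs.simple i, p.2 + if p.1 = cs.simple i then 1 else 0))
    (by
      rintro ⟨t, ε⟩
      have hfixed : cs.simple i * t * cs.simple i = cs.simple i ↔ t = cs.simple i := by
        rw [mul_eq_right, mul_eq_one_iff_eq_inv', inv_simple]
      simp only [Prod.mk.injEq, hfixed, add_assoc, CharTwo.add_self_eq_zero, add_zero, and_true]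
      simp [← mul_assoc, simple_mul_simple_self])

theorem signPerm_apply (i : B) (p : W × ZMod 2) :
    cs.signPerm i p =
      (cs.simple i * p.1 * cs.simple i, p.2 + if p.1 = cs.simple i then 1 else 0) :=
  rfl

theorem prod_map_signPerm_apply (ω : List B) (x : W) (ε : ZMod 2) :
    (ω.map cs.signPerm).prod ((cs.wordProd ω)⁻¹ * x * cs.wordProd ω, ε) =
      (x, ε + (cs.leftInvSeq ω).count x) := by
  induction ω using List.reverseRecOn generalizing ε with
  | nil => simp
  | append_singleton ω i ih =>
    rw [← List.concat_eq_append, leftInvSeq_concat, List.concat_eq_append, List.map_append,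
      List.prod_append, wordProd_append, List.map_singleton, List.prod_singleton,
      wordProd_singleton, Equiv.Perm.mul_apply, signPerm_apply]
    have hconj : cs.simple i * ((cs.wordProd ω * cs.simple i)⁻¹ * x * (cs.wordProd ω * cs.simple i)) *
        cs.simple i = (cs.wordProd ω)⁻¹ * x * cs.wordProd ω := by
      simp [mul_assoc, simple_mul_simple_cancel_left, inv_simple, simple_mul_simple_self]
    have hnew : (cs.wordProd ω * cs.simple i)⁻¹ * x * (cs.wordProd ω * cs.simple i) = cs.simple i ↔
        cs.wordProd ω * cs.simple i * (cs.wordProd ω)⁻¹ = x := by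
      rw [mul_assoc, inv_mul_eq_iff_eq_mul, ← eq_mul_inv_iff_mul_eq, eq_comm]
      simp [mul_assoc, inv_simple]
    dsimp only
    rw [hconj, ih, List.concat_eq_append, List.count_append, List.count_singleton]
    simp only [hnew, beq_iff_eq, Nat.cast_add, Nat.cast_ite, Nat.cast_one, Nat.cast_zero,
      add_right_comm, add_assoc]

theorem isLiftable_signPerm : M.IsLiftable cs.signPerm := by
  intro i i'
  ext ⟨x, ε⟩ : 1
  have hword : cs.wordProd (alternatingWord i i' (2 * M i i')) = 1 := by
    rw [wordProd, prod_map_alternatingWord_two_mul, simple_mul_simple_pow]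
  have hcount : ((cs.leftInvSeq (alternatingWord i i' (2 * M i i'))).count x : ZMod 2) = 0 := by
    rw [leftInvSeq_alternatingWord_two_mul_eq_append_self, List.count_append, Nat.cast_add,
      CharTwo.add_self_eq_zero]
  have := cs.prod_map_signPerm_apply (alternatingWord i i' (2 * M i i')) x ε
  rwa [prod_map_alternatingWord_two_mul, hword, inv_one, one_mul, mul_one, hcount,
    add_zero] at this

def signRep : W →* Equiv.Perm (W × ZMod 2) :=
  cs.lift ⟨cs.signPerm, cs.isLiftable_signPerm⟩

theorem signRep_wordProd (ω : List B) :
    cs.signRep (cs.wordProd ω) = (ω.map cs.signPerm).prod := by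
  rw [wordProd, map_list_prod, List.map_map]
  congr 2
  ext1 i
  exact cs.lift_apply_simple cs.isLiftable_signPerm i

theorem count_leftInvSeq_cast_eq_of_wordProd_eq {ω ω' : List B}
    (h : cs.wordProd ω = cs.wordProd ω') (x : W) :
    ((cs.leftInvSeq ω).count x : ZMod 2) = (cs.leftInvSeq ω').count x := by
  have hω := cs.prod_map_signPerm_apply ω x 0
  have hω' := cs.prod_map_signPerm_apply ω' x 0
  rw [← signRep_wordProd, h] at hω
  rw [← signRep_wordProd, hω] at hω'
  simpa using congrArg Prod.snd hω'

end SignRepresentation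

theorem simple_mem_leftInvSeq_of_isLeftDescent {ω : List B} {i : B}
    (h : cs.IsLeftDescent (cs.wordProd ω) i) : cs.simple i ∈ cs.leftInvSeq ω := by
  classical
  obtain ⟨ψ, hψ, hψω⟩ := cs.exists_isReduced (cs.simple i * cs.wordProd ω)
  have hword : cs.wordProd (i :: ψ) = cs.wordProd ω := by
    rw [wordProd_cons, ← hψω, simple_mul_simple_cancel_left]
  have hnotMem : cs.simple i ∉ cs.leftInvSeq ψ := fun hmem ↦ by
    have hlt := (cs.isLeftInversion_of_mem_leftInvSeq hψ hmem).2
    rw [← hψω, simple_mul_simple_cancel_left] at hlt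
    exact lt_asymm h hlt
  have hcount : (cs.leftInvSeq (i :: ψ)).count (cs.simple i) = 1 := by
    have hfix : MulAut.conj (cs.simple i) (cs.simple i) = cs.simple i := by simp
    have hmap : ((cs.leftInvSeq ψ).map (MulAut.conj (cs.simple i))).count (cs.simple i) = 0 := by
      nth_rw 1 [← hfix]
      rw [List.count_map_of_injective _ _ (MulEquiv.injective _)]
      exact List.count_eq_zero.mpr hnotMem
    rw [leftInvSeq, List.count_cons, hmap]
    simp
  have hodd := cs.count_leftInvSeq_cast_eq_of_wordProd_eq hword (cs.simple i)
  rw [hcount] at hodd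
  refine List.count_pos_iff.mp (Nat.pos_of_ne_zero fun hzero ↦ ?_)
  rw [hzero] at hodd
  exact absurd hodd (by decide)

theorem simple_mul_eq_mul_simple_of_isLeftDescent {w : W} {i j : B}
    (hi : ¬cs.IsLeftDescent w i) (hij : cs.IsLeftDescent (w * cs.simple j) i) :
    cs.simple i * w = w * cs.simple j := by
  obtain ⟨ω, hω, rfl⟩ := cs.exists_isReduced w
  have hmem := cs.simple_mem_leftInvSeq_of_isLeftDescent (ω := ω.concat j)
    (by rwa [wordProd_concat])
  rw [leftInvSeq_concat, List.concat_eq_append, List.mem_append, List.mem_singleton] at hmem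
  rcases hmem with hmem | heq
  · exact absurd (cs.isLeftInversion_of_mem_leftInvSeq hω hmem).2 hi
  · rw [heq]
    group

end CoxeterSystem

/-- Let `(W,S)` be a Coxeter system, `J` a subset of the index set of the
simple reflections, `W_J` the subgroup generated by the simple reflections indexed by `J`,
and `W^J = {w : ℓ(w s_j) > ℓ(w) for all j ∈ J}`.  If `w ∈ W^J` and `s_i` is a simple
reflection such that `w⁻¹ s_i w ∉ W_J`, then `s_i w ∈ W^J`. -/
theorem simple_mul_mem_minimal_coset_reps
    {B : Type*} {W : Type*} [Group W] {M : CoxeterMatrix B}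
    (cs : CoxeterSystem M W) (J : Set B) (w : W)
    (hw : ∀ j ∈ J, cs.length (w * cs.simple j) > cs.length w)
    (i : B)
    (hi : w⁻¹ * cs.simple i * w ∉ Subgroup.closure (cs.simple '' J)) :
    ∀ j ∈ J, cs.length (cs.simple i * w * cs.simple j) > cs.length (cs.simple i * w) := by
  intro j hj
  by_contra hle
  have hdescents : ¬cs.IsLeftDescent w i ∧ cs.IsLeftDescent (w * cs.simple j) i := by
    have := hw j hj
    have := cs.length_simple_mul w i
    have := cs.length_mul_simple (cs.simple i * w) j
    have := cs.length_mul_simple_ne (cs.simple i * w) j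
    have := cs.length_simple_mul (w * cs.simple j) i
    rw [← mul_assoc] at this
    rw [CoxeterSystem.IsLeftDescent, CoxeterSystem.IsLeftDescent, ← mul_assoc]
    omega
  have hconj : w⁻¹ * cs.simple i * w = cs.simple j := by
    rw [mul_assoc, cs.simple_mul_eq_mul_simple_of_isLeftDescent hdescents.1 hdescents.2,
      inv_mul_cancel_left]
  exact hi (hconj ▸ Subgroup.subset_closure ⟨j, hj, rfl⟩)
end

section
/- Let γ₁ ≥ γ₂ ≥ … ≥ γ_r be integers, let J = {i : 1 ≤ i ≤ r−1, γ_i = γ_{i+1}}, and let W^J = {w ∈ S_r : ℓ(w s_j) > ℓ(w) for all j ∈ J}, where ℓ is the Coxeter length on S_r and s_j = (j, j+1). Suppose w₂ ∈ W^J and λ ∈ ℤ^r is w₂-almost dominant. If 1 ≤ i, j ≤ r with i ≠ j and λ_i + r − i = λ_j + r − j, then γ_{w₂⁻¹(i)} ≠ γ_{w₂⁻¹(j)}. -/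
open Order

theorem Antitone.strictMonoOn_preimage_singleton_of_lt_succ {α β γ : Type*} [LinearOrder α]
    [SuccOrder α] [IsSuccArchimedean α] [PartialOrder β] [Preorder γ] {g : α → β}
    (hg : Antitone g) {h : α → γ} (hadj : ∀ a, ¬IsMax a → g (succ a) = g a → h a < h (succ a))
    (c : β) : StrictMonoOn h (g ⁻¹' {c}) :=
  strictMonoOn_of_lt_succ (Set.ordConnected_singleton.preimage_anti hg)
    fun a ha hac hsac => hadj a ha (hsac.trans hac.symm)

theorem Fin.exists_orderSucc_eq_of_not_isMax {r : ℕ} {k : Fin r} (hk : ¬IsMax k) :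
    ∃ h : (k : ℕ) + 1 < r, Order.succ k = ⟨k + 1, h⟩ := by
  obtain ⟨l, hkl⟩ := not_isMax_iff.mp hk
  have hr : (k : ℕ) + 1 < r := by have := l.isLt; rw [Fin.lt_def] at hkl; omega
  have h₁ : ((Order.succ k : Fin r) : ℕ) ≤ k + 1 :=
    succ_le_of_lt (b := ⟨k + 1, hr⟩) (Fin.lt_def.mpr (Nat.lt_succ_self _))
  have h₂ : (k : ℕ) < (Order.succ k : Fin r) := lt_succ_of_not_isMax hk
  exact ⟨hr, Fin.ext (show _ = (k : ℕ) + 1 by omega)⟩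

theorem Equiv.swap_lt_swap_of_lt {r : ℕ} {k k' a b : Fin r} (hk : (k : ℕ) + 1 = k')
    (hab : a < b) (hne : ¬(a = k ∧ b = k')) : swap k k' a < swap k k' b := by
  simp only [Equiv.swap_apply_def, Fin.ext_iff, Fin.lt_def] at *
  split_ifs <;> omega

theorem invLen_mul_swap_le {r : ℕ} {w : Equiv.Perm (Fin r)} {k k' : Fin r}
    (hk : (k : ℕ) + 1 = k') (hw : w k' < w k) : invLen (w * Equiv.swap k k') ≤ invLen w := by
  unfold invLen
  refine Finset.card_le_card_of_injOn (Equiv.prodCongr (Equiv.swap k k') (Equiv.swap k k')) ?_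
    (Equiv.injective _).injOn
  rintro ⟨a, b⟩ hab
  simp only [Finset.mem_coe, Finset.mem_filter, Finset.mem_univ, true_and] at hab ⊢
  rw [Equiv.Perm.mul_apply, Equiv.Perm.mul_apply] at hab
  refine ⟨Equiv.swap_lt_swap_of_lt hk hab.1 ?_, hab.2⟩
  rintro ⟨rfl, rfl⟩
  rw [Equiv.swap_apply_left, Equiv.swap_apply_right] at hab
  exact hab.2.asymm hw

theorem lt_apply_succ_of_invLen_lt_invLen_mul_swap {r : ℕ} {w : Equiv.Perm (Fin r)} {k : Fin r}
    (hk : ¬IsMax k) (h : invLen w < invLen (w * Equiv.swap k (succ k))) : w k < w (succ k) := by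
  obtain ⟨hr, hs⟩ := Fin.exists_orderSucc_eq_of_not_isMax hk
  refine lt_of_not_ge fun hle => h.not_ge (invLen_mul_swap_le (by rw [hs]) ?_)
  exact hle.lt_of_ne (w.injective.ne (lt_succ_of_not_isMax hk).ne')

/-- `w ∈ W^J`, where `J` is the set of `j` with `γ_j = γ_{j+1}`. -/
def IsMinCosetRep {r : ℕ} (γ : Fin r → ℤ) (w : Equiv.Perm (Fin r)) : Prop :=
  ∀ (j : ℕ) (hj : j + 1 < r), γ ⟨j, by omega⟩ = γ ⟨j + 1, hj⟩ →
    invLen w < invLen (w * Equiv.swap ⟨j, by omega⟩ ⟨j + 1, hj⟩)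

theorem IsMinCosetRep.strictMonoOn {r : ℕ} {γ : Fin r → ℤ} {w : Equiv.Perm (Fin r)}
    (hw : IsMinCosetRep γ w) (hγ : Antitone γ) (c : ℤ) : StrictMonoOn w (γ ⁻¹' {c}) := by
  refine hγ.strictMonoOn_preimage_singleton_of_lt_succ (fun k hk hγk => ?_) c
  refine lt_apply_succ_of_invLen_lt_invLen_mul_swap hk ?_
  obtain ⟨hr, hs⟩ := Fin.exists_orderSucc_eq_of_not_isMax hk
  rw [hs] at hγk ⊢
  exact hw k hr hγk.symm

/-- `λ_i + r − i` in the paper's `1`-indexed notation. -/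
def addStaircase {r : ℕ} (lam : Fin r → ℤ) (k : Fin r) : ℤ :=
  lam k + ((Fin.rev k : ℕ) : ℤ)

theorem AlmostDominant.addStaircase_succ_le {r : ℕ} {w : Equiv.Perm (Fin r)} {lam : Fin r → ℤ}
    (hlam : AlmostDominant w lam) {k : Fin r} (hk : ¬IsMax k) :
    addStaircase lam (succ k) ≤ addStaircase lam k ∧
      (addStaircase lam (succ k) = addStaircase lam k → w⁻¹ (succ k) < w⁻¹ k) := by
  obtain ⟨hr, hs⟩ := Fin.exists_orderSucc_eq_of_not_isMax hk
  have hne : w⁻¹ k ≠ w⁻¹ ⟨k + 1, hr⟩ := w⁻¹.injective.ne (Fin.ne_of_val_ne (by simp))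
  have := hlam k hr
  simp only [Fin.eta] at this
  rw [hs]
  simp only [addStaircase, Fin.val_rev]
  rcases hne.lt_or_gt with hlt | hgt
  · have := this.1 hlt; omega
  · have := this.2 hgt; exact ⟨by omega, fun _ => hgt⟩

theorem AlmostDominant.strictAntiOn_inv {r : ℕ} {w : Equiv.Perm (Fin r)} {lam : Fin r → ℤ}
    (hlam : AlmostDominant w lam) (c : ℤ) : StrictAntiOn (⇑w⁻¹) (addStaircase lam ⁻¹' {c}) :=
  (antitone_of_succ_le fun _ hk => (hlam.addStaircase_succ_le hk).1)
    |>.strictMonoOn_preimage_singleton_of_lt_succ (γ := (Fin r)ᵒᵈ)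
      (fun _ hk => (hlam.addStaircase_succ_le hk).2) c

/-- Let `γ₁ ≥ … ≥ γ_r` be integers, `J = {i : γ_i = γ_{i+1}}`,
and `W^J = {w ∈ S_r : ℓ(w s_j) > ℓ(w) for all j ∈ J}`.  Suppose `w₂ ∈ W^J` and
`λ ∈ ℤ^r` is `w₂`-almost dominant.  If `i ≠ j` and `λ_i + r − i = λ_j + r − j`
then `γ_{w₂⁻¹(i)} ≠ γ_{w₂⁻¹(j)}`. -/
theorem no_repeated_colors_in_same_column
    (r : ℕ) (γ : Fin r → ℤ) (hγ : Antitone γ)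
    (w₂ : Equiv.Perm (Fin r))
    (hw₂ : ∀ (j : ℕ) (hj : j + 1 < r), γ ⟨j, by omega⟩ = γ ⟨j + 1, hj⟩ →
      invLen w₂ < invLen (w₂ * Equiv.swap ⟨j, by omega⟩ ⟨j + 1, hj⟩))
    (lam : Fin r → ℤ) (hlam : AlmostDominant w₂ lam)
    (i j : Fin r) (hij : i ≠ j)
    (hcol : lam i + ((Fin.rev i : ℕ) : ℤ) = lam j + ((Fin.rev j : ℕ) : ℤ)) :
    γ (w₂⁻¹ i) ≠ γ (w₂⁻¹ j) := by
  wlog hlt : i < j generalizing i j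
  · exact (this j i hij.symm hcol.symm (hij.lt_or_gt.resolve_left hlt)).symm
  intro hγij
  have hinv : w₂⁻¹ j < w₂⁻¹ i := hlam.strictAntiOn_inv _ rfl hcol.symm hlt
  have hw : w₂ (w₂⁻¹ j) < w₂ (w₂⁻¹ i) :=
    IsMinCosetRep.strictMonoOn hw₂ hγ _ hγij.symm rfl hinv
  simp only [Equiv.Perm.coe_inv, Equiv.apply_symm_apply] at hw
  exact hlt.asymm hw
end
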